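/- The four-linear dyadic form bound: let ψ ∈ C^∞_c((−2,−1/2)∪(1/2,2)) be a nonnegative even bump function and for l ≥ 1 define Λ_l(g₁,g₂,g₃,g₄) = 2^{-2l} ∫_{ℝ⁴} ψ(2^{-l}(t₁−t₂)) ψ(2^{-l}(t₁−t₃)) ψ(2^{-l}(t₂−t₄)) ψ(2^{-l}(t₃−t₄)) Π_{i=1}^4 g_i(t_i) dt_i for nonnegative measurable g₁,…,g₄ on ℝ. Then there is a constant C independent of l such that |Λ_l(g₁,g₂,g₃,g₄)| ≤ C 2^l ‖g₁‖_{L^∞} ‖g₂‖_{L²} ‖g₃‖_{L²} ‖g₄‖_{L^∞}. -/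

import Mathlib

open MeasureTheory Complex Filter Set
open scoped ENNReal NNReal BigOperators

noncomputable section

namespace FourAux

def ind (R d : ℝ) : ℝ≥0∞ := if |d| ≤ R then 1 else 0

lemma ind_eq (R : ℝ) : ind R = (Set.Icc (-R) R).indicator (fun _ => (1:ℝ≥0∞)) := by
  funext d
  simp [ind, Set.indicator, Set.mem_Icc, abs_le]

lemma measurable_ind (R : ℝ) : Measurable (ind R) := by
  rw [ind_eq]
  exact measurable_const.indicator measurableSet_Icc

lemma ind_le_one (R d : ℝ) : ind R d ≤ 1 := by
  unfold ind; split_ifs <;> simp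

lemma ind_sub_comm (R a b : ℝ) : ind R (a - b) = ind R (b - a) := by
  unfold ind; rw [abs_sub_comm]

lemma ind_sq (R d : ℝ) : ind R d * ind R d = ind R d := by
  unfold ind; split_ifs <;> simp

lemma ind_rpow_two (R d : ℝ) : ind R d ^ (2:ℝ) = ind R d := by
  unfold ind; split_ifs <;> simp

lemma ind_triangle (R a b : ℝ) : ind R a * ind R b ≤ ind R a * ind (2*R) (b - a) := by
  unfold ind
  split_ifs with h1 h2 h3 <;> simp_all
  linarith [le_trans (abs_sub b a) (show |b| + |a| ≤ 2*R by linarith)]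

lemma lintegral_ind_sub (R a : ℝ) : ∫⁻ t : ℝ, ind R (t - a) = ENNReal.ofReal (2*R) := by
  have h : (fun t : ℝ => ind R (t - a)) = (Set.Icc (a - R) (a + R)).indicator (fun _ => (1:ℝ≥0∞)) := by
    funext t
    simp only [ind, Set.indicator, Set.mem_Icc, abs_le]
    congr 1
    simp only [eq_iff_iff]
    constructor <;> intro h <;> constructor <;> linarith [h.1, h.2]
  rw [h]
  rw [lintegral_indicator measurableSet_Icc]
  simp [Real.volume_Icc]
  ring_nf
  rw [ENNReal.ofReal_mul' (by norm_num), ENNReal.ofReal_ofNat]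

lemma lintegral_ind_sub' (R a : ℝ) : ∫⁻ t : ℝ, ind R (a - t) = ENNReal.ofReal (2*R) := by
  simp_rw [ind_sub_comm R a]
  exact lintegral_ind_sub R a

lemma rpow_two_eq (x : ℝ≥0∞) : x ^ (2:ℝ) = x ^ (2:ℕ) := by
  rw [show (2:ℝ) = ((2:ℕ):ℝ) by norm_num, ENNReal.rpow_natCast]

lemma swap_ind (R : ℝ) {h : ℝ → ℝ≥0∞} (hh : Measurable h) :
    ∫⁻ t₁ : ℝ, ∫⁻ t₂ : ℝ, ind R (t₁ - t₂) * h t₂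
      = ENNReal.ofReal (2*R) * ∫⁻ t₂, h t₂ := by
  rw [lintegral_lintegral_swap]
  · have : ∀ t₂ : ℝ, ∫⁻ t₁ : ℝ, ind R (t₁ - t₂) * h t₂
        = ENNReal.ofReal (2*R) * h t₂ := by
      intro t₂
      rw [lintegral_mul_const _ (show Measurable fun t₁ : ℝ => ind R (t₁ - t₂) from
        (measurable_ind R).comp (measurable_id.sub measurable_const)),
        lintegral_ind_sub, mul_comm]
    simp_rw [this]
    exact lintegral_const_mul _ hh
  · exact (((measurable_ind R).comp (measurable_fst.sub measurable_snd)).mul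
      (hh.comp measurable_snd)).aemeasurable

lemma cauchy_schwarz (R : ℝ) (g₂ g₃ : ℝ → ℝ≥0∞) (h2 : Measurable g₂) (h3 : Measurable g₃) :
    ∫⁻ t₂ : ℝ, ∫⁻ t₃ : ℝ, ind R (t₂ - t₃) * (g₂ t₂ * g₃ t₃)
      ≤ ENNReal.ofReal (2*R) * (∫⁻ t : ℝ, g₂ t ^ 2) ^ ((1:ℝ)/2)
        * (∫⁻ t : ℝ, g₃ t ^ 2) ^ ((1:ℝ)/2) := by
  set μ := ((volume : Measure ℝ).prod (volume : Measure ℝ)) with hμ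
  set f : ℝ × ℝ → ℝ≥0∞ := fun p => ind R (p.1 - p.2) * g₂ p.1 with hfdef
  set g : ℝ × ℝ → ℝ≥0∞ := fun p => ind R (p.1 - p.2) * g₃ p.2 with hgdef
  have hind : Measurable fun p : ℝ × ℝ => ind R (p.1 - p.2) :=
    (measurable_ind R).comp (measurable_fst.sub measurable_snd)
  have hf : Measurable f := hind.mul (h2.comp measurable_fst)
  have hg : Measurable g := hind.mul (h3.comp measurable_snd)
  have hpq : Real.HolderConjugate 2 2 := Real.HolderConjugate.two_two
  have key := ENNReal.lintegral_mul_le_Lp_mul_Lq μ hpq hf.aemeasurable hg.aemeasurable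
  have hL : ∫⁻ t₂ : ℝ, ∫⁻ t₃ : ℝ, ind R (t₂ - t₃) * (g₂ t₂ * g₃ t₃)
      = ∫⁻ p, (f * g) p ∂μ := by
    rw [hμ, lintegral_prod _ ((show Measurable (f * g) from hf.mul hg).aemeasurable)]
    refine lintegral_congr fun t₂ => lintegral_congr fun t₃ => ?_
    simp only [hfdef, hgdef, Pi.mul_apply]
    rw [show ind R (t₂ - t₃) * g₂ t₂ * (ind R (t₂ - t₃) * g₃ t₃)
      = ind R (t₂ - t₃) * ind R (t₂ - t₃) * (g₂ t₂ * g₃ t₃) by ring, ind_sq]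
  have hF : ∫⁻ p, f p ^ (2:ℝ) ∂μ = ENNReal.ofReal (2*R) * ∫⁻ t, g₂ t ^ 2 := by
    rw [hμ, lintegral_prod _ ((hf.pow_const _).aemeasurable)]
    have : ∀ t₂ : ℝ, (∫⁻ t₃ : ℝ, f (t₂, t₃) ^ (2:ℝ))
        = ENNReal.ofReal (2*R) * g₂ t₂ ^ 2 := by
      intro t₂
      have : ∀ t₃ : ℝ, f (t₂, t₃) ^ (2:ℝ) = ind R (t₂ - t₃) * g₂ t₂ ^ 2 := by
        intro t₃
        simp only [hfdef]
        rw [ENNReal.mul_rpow_of_nonneg _ _ (by norm_num : (0:ℝ) ≤ 2), ind_rpow_two,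
          rpow_two_eq]
      simp_rw [this]
      rw [lintegral_mul_const _ (show Measurable fun t₃ : ℝ => ind R (t₂ - t₃) from
        (measurable_ind R).comp (measurable_const.sub measurable_id)),
        lintegral_ind_sub', mul_comm]
    simp_rw [this]
    exact lintegral_const_mul _ (h2.pow_const _)
  have hG : ∫⁻ p, g p ^ (2:ℝ) ∂μ = ENNReal.ofReal (2*R) * ∫⁻ t, g₃ t ^ 2 := by
    rw [hμ, lintegral_prod _ ((hg.pow_const _).aemeasurable), lintegral_lintegral_swap
      (show AEMeasurable (Function.uncurry fun t₂ t₃ : ℝ => g (t₂, t₃) ^ (2:ℝ)) μ from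
        (hg.pow_const (2:ℝ)).aemeasurable)]
    have : ∀ t₃ : ℝ, (∫⁻ t₂ : ℝ, g (t₂, t₃) ^ (2:ℝ))
        = ENNReal.ofReal (2*R) * g₃ t₃ ^ 2 := by
      intro t₃
      have : ∀ t₂ : ℝ, g (t₂, t₃) ^ (2:ℝ) = ind R (t₂ - t₃) * g₃ t₃ ^ 2 := by
        intro t₂
        simp only [hgdef]
        rw [ENNReal.mul_rpow_of_nonneg _ _ (by norm_num : (0:ℝ) ≤ 2), ind_rpow_two,
          rpow_two_eq]
      simp_rw [this]
      rw [lintegral_mul_const _ (show Measurable fun t₂ : ℝ => ind R (t₂ - t₃) from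
        (measurable_ind R).comp (measurable_id.sub measurable_const)),
        lintegral_ind_sub, mul_comm]
    simp_rw [this]
    exact lintegral_const_mul _ (h3.pow_const _)
  rw [hL]
  refine key.trans ?_
  rw [hF, hG, ENNReal.mul_rpow_of_nonneg _ _ (by norm_num : (0:ℝ) ≤ 1/2),
    ENNReal.mul_rpow_of_nonneg _ _ (by norm_num : (0:ℝ) ≤ 1/2)]
  rw [show ENNReal.ofReal (2*R) ^ ((1:ℝ)/2) * (∫⁻ t, g₂ t ^ 2) ^ ((1:ℝ)/2)
      * (ENNReal.ofReal (2*R) ^ ((1:ℝ)/2) * (∫⁻ t, g₃ t ^ 2) ^ ((1:ℝ)/2))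
    = (ENNReal.ofReal (2*R) ^ ((1:ℝ)/2) * ENNReal.ofReal (2*R) ^ ((1:ℝ)/2))
      * (∫⁻ t, g₂ t ^ 2) ^ ((1:ℝ)/2) * (∫⁻ t, g₃ t ^ 2) ^ ((1:ℝ)/2) by ring]
  rw [← ENNReal.rpow_add_of_nonneg _ _ (by norm_num) (by norm_num)]
  norm_num

end FourAux

def Lambda (ψ : ℝ → ℝ) (l : ℕ) (g₁ g₂ g₃ g₄ : ℝ → ℝ≥0∞) : ℝ≥0∞ :=
  ((2 : ℝ≥0∞) ^ (2 * l))⁻¹ *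
    ∫⁻ t₁ : ℝ, ∫⁻ t₂ : ℝ, ∫⁻ t₃ : ℝ, ∫⁻ t₄ : ℝ,
      ENNReal.ofReal (ψ ((t₁ - t₂) / 2 ^ l)) * ENNReal.ofReal (ψ ((t₁ - t₃) / 2 ^ l)) *
      ENNReal.ofReal (ψ ((t₂ - t₄) / 2 ^ l)) * ENNReal.ofReal (ψ ((t₃ - t₄) / 2 ^ l)) *
      (g₁ t₁ * g₂ t₂ * g₃ t₃ * g₄ t₄)

open FourAux

/-- **The four-linear dyadic form bound**: for a nonnegative even bump function
`ψ ∈ C^∞_c((-2,-1/2) ∪ (1/2,2))` there is a constant `C`, independent of `l ≥ 1`, with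
`Λ_l(g₁,g₂,g₃,g₄) ≤ C 2^l ‖g₁‖_∞ ‖g₂‖_2 ‖g₃‖_2 ‖g₄‖_∞` for all nonnegative measurable
`g₁, g₂, g₃, g₄` on `ℝ`. -/
theorem fourlinear_form_bound
    (ψ : ℝ → ℝ) (hψsmooth : ContDiff ℝ (⊤ : ℕ∞) ψ) (hψsupp : HasCompactSupport ψ)
    (hψsupp' : tsupport ψ ⊆ Set.Ioo (-2 : ℝ) (-(1:ℝ)/2) ∪ Set.Ioo ((1:ℝ)/2) 2)
    (hψpos : ∀ s, 0 ≤ ψ s) (hψeven : ∀ s, ψ (-s) = ψ s) :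
    ∃ C : ℝ≥0, ∀ l : ℕ, 1 ≤ l → ∀ g₁ g₂ g₃ g₄ : ℝ → ℝ≥0∞,
      Measurable g₁ → Measurable g₂ → Measurable g₃ → Measurable g₄ →
      Lambda ψ l g₁ g₂ g₃ g₄
        ≤ C * (2 : ℝ≥0∞) ^ l * essSup g₁ volume *
            (∫⁻ t : ℝ, g₂ t ^ 2) ^ ((1:ℝ)/2) * (∫⁻ t : ℝ, g₃ t ^ 2) ^ ((1:ℝ)/2) *
            essSup g₄ volume := by
  obtain ⟨x₀, hx₀⟩ := hψsmooth.continuous.exists_forall_ge_of_hasCompactSupport hψsupp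
  set M : ℝ≥0 := (ψ x₀).toNNReal with hM
  refine ⟨128 * M ^ 4, ?_⟩
  intro l hl g₁ g₂ g₃ g₄ hg₁ hg₂ hg₃ hg₄
  set R : ℝ := 2 * 2 ^ l with hR
  have hLpos : (0:ℝ) < 2 ^ l := by positivity
  -- pointwise bound on ψ
  have hψb : ∀ d : ℝ, ENNReal.ofReal (ψ (d / 2 ^ l)) ≤ (M:ℝ≥0∞) * ind R d := by
    intro d
    by_cases h : |d| ≤ R
    · rw [show ind R d = 1 from if_pos h, mul_one]
      exact (ENNReal.ofReal_le_ofReal (hx₀ _)).trans le_rfl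
    · have hz : ψ (d / 2 ^ l) = 0 := by
        apply image_eq_zero_of_notMem_tsupport
        intro hmem
        have hio := hψsupp' hmem
        have habs : |d / 2 ^ l| < 2 := by
          rcases hio with ⟨h1, h2⟩ | ⟨h1, h2⟩ <;> rw [abs_lt] <;>
            constructor <;> linarith
        rw [abs_div, abs_of_pos hLpos, div_lt_iff₀ hLpos] at habs
        exact h (by rw [hR]; linarith)
      simp [hz]
  set A₁ := essSup g₁ volume with hA₁
  set A₄ := essSup g₄ volume with hA₄
  set N₂ := (∫⁻ t : ℝ, g₂ t ^ 2) ^ ((1:ℝ)/2) with hN₂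
  set N₃ := (∫⁻ t : ℝ, g₃ t ^ 2) ^ ((1:ℝ)/2) with hN₃
  set K : ℝ≥0∞ := (M:ℝ≥0∞) ^ 4 * A₁ * A₄ with hK
  set c₀ : ℝ≥0∞ := ENNReal.ofReal (2 * R) with hc₀
  set c₂ : ℝ≥0∞ := ENNReal.ofReal (2 * (2 * R)) with hc₂
  -- Step 1: replace ψ by indicators, g₁ g₄ by essSups
  have step1 : (∫⁻ t₁ : ℝ, ∫⁻ t₂ : ℝ, ∫⁻ t₃ : ℝ, ∫⁻ t₄ : ℝ,
      ENNReal.ofReal (ψ ((t₁ - t₂) / 2 ^ l)) * ENNReal.ofReal (ψ ((t₁ - t₃) / 2 ^ l)) *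
      ENNReal.ofReal (ψ ((t₂ - t₄) / 2 ^ l)) * ENNReal.ofReal (ψ ((t₃ - t₄) / 2 ^ l)) *
      (g₁ t₁ * g₂ t₂ * g₃ t₃ * g₄ t₄))
      ≤ ∫⁻ t₁ : ℝ, ∫⁻ t₂ : ℝ, ∫⁻ t₃ : ℝ, ∫⁻ t₄ : ℝ,
        ((M:ℝ≥0∞) * ind R (t₁ - t₂)) * ((M:ℝ≥0∞) * ind R (t₁ - t₃)) *
        ((M:ℝ≥0∞) * ind R (t₂ - t₄)) * ((M:ℝ≥0∞) * ind R (t₃ - t₄)) *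
        (A₁ * g₂ t₂ * g₃ t₃ * A₄) := by
    refine lintegral_mono_ae ?_
    filter_upwards [ENNReal.ae_le_essSup g₁] with t₁ h1
    refine lintegral_mono fun t₂ => lintegral_mono fun t₃ => ?_
    refine lintegral_mono_ae ?_
    filter_upwards [ENNReal.ae_le_essSup g₄] with t₄ h4
    gcongr <;> first | exact hψb _ | exact h1 | exact h4
  -- measurability helpers
  have hmind : ∀ a : ℝ, Measurable fun t : ℝ => ind R (a - t) :=
    fun a => (measurable_ind R).comp (measurable_const.sub measurable_id)
  have hmind' : ∀ a : ℝ, Measurable fun t : ℝ => ind R (t - a) :=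
    fun a => (measurable_ind R).comp (measurable_id.sub measurable_const)
  -- Step 2: integrate out t₄
  have ev4 : ∀ t₁ t₂ t₃ : ℝ, (∫⁻ t₄ : ℝ,
      ((M:ℝ≥0∞) * ind R (t₁ - t₂)) * ((M:ℝ≥0∞) * ind R (t₁ - t₃)) *
      ((M:ℝ≥0∞) * ind R (t₂ - t₄)) * ((M:ℝ≥0∞) * ind R (t₃ - t₄)) *
      (A₁ * g₂ t₂ * g₃ t₃ * A₄))
      ≤ K * (ind R (t₁ - t₂) * ind R (t₁ - t₃) * g₂ t₂ * g₃ t₃) * c₀ := by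
    intro t₁ t₂ t₃
    have hrw : ∀ t₄ : ℝ,
        ((M:ℝ≥0∞) * ind R (t₁ - t₂)) * ((M:ℝ≥0∞) * ind R (t₁ - t₃)) *
        ((M:ℝ≥0∞) * ind R (t₂ - t₄)) * ((M:ℝ≥0∞) * ind R (t₃ - t₄)) *
        (A₁ * g₂ t₂ * g₃ t₃ * A₄)
        = (K * (ind R (t₁ - t₂) * ind R (t₁ - t₃) * g₂ t₂ * g₃ t₃)) *
          (ind R (t₂ - t₄) * ind R (t₃ - t₄)) := by
      intro t₄; rw [hK]; ring
    simp_rw [hrw]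
    rw [lintegral_const_mul _ (show Measurable fun t₄ : ℝ => ind R (t₂ - t₄) * ind R (t₃ - t₄) from (hmind t₂).mul (hmind t₃))]
    have hle : (∫⁻ t₄ : ℝ, ind R (t₂ - t₄) * ind R (t₃ - t₄)) ≤ c₀ := by
      calc (∫⁻ t₄ : ℝ, ind R (t₂ - t₄) * ind R (t₃ - t₄))
          ≤ ∫⁻ t₄ : ℝ, ind R (t₂ - t₄) := by
            refine lintegral_mono fun t₄ => ?_
            calc ind R (t₂ - t₄) * ind R (t₃ - t₄) ≤ ind R (t₂ - t₄) * 1 :=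
              mul_le_mul_right (ind_le_one _ _) _
            _ = ind R (t₂ - t₄) := mul_one _
        _ = c₀ := lintegral_ind_sub' R t₂
    exact mul_le_mul_right hle _
  -- Step 3: triangle inequality
  have tri : ∀ t₁ t₂ t₃ : ℝ,
      K * (ind R (t₁ - t₂) * ind R (t₁ - t₃) * g₂ t₂ * g₃ t₃) * c₀
      ≤ K * (ind R (t₁ - t₂) * ind (2*R) (t₂ - t₃) * g₂ t₂ * g₃ t₃) * c₀ := by
    intro t₁ t₂ t₃
    have h := ind_triangle R (t₁ - t₂) (t₁ - t₃)
    rw [show t₁ - t₃ - (t₁ - t₂) = t₂ - t₃ by ring] at h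
    gcongr
  -- functions for the remaining integrals
  set W := fun t₂ : ℝ => ∫⁻ t₃ : ℝ, ind (2*R) (t₂ - t₃) * g₃ t₃ with hW
  have hWm : Measurable W := by
    apply Measurable.lintegral_prod_right'
      (f := fun p : ℝ × ℝ => ind (2*R) (p.1 - p.2) * g₃ p.2)
    exact ((measurable_ind _).comp (measurable_fst.sub measurable_snd)).mul
      (hg₃.comp measurable_snd)
  set h := fun t₂ : ℝ => g₂ t₂ * W t₂ with hh
  have hhm : Measurable h := hg₂.mul hWm
  -- Step 4: integrate out t₃ and pull constants
  have ev3 : ∀ t₁ t₂ : ℝ, (∫⁻ t₃ : ℝ,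
      K * (ind R (t₁ - t₂) * ind (2*R) (t₂ - t₃) * g₂ t₂ * g₃ t₃) * c₀)
      = K * c₀ * (ind R (t₁ - t₂) * h t₂) := by
    intro t₁ t₂
    have hrw : ∀ t₃ : ℝ, K * (ind R (t₁ - t₂) * ind (2*R) (t₂ - t₃) * g₂ t₂ * g₃ t₃) * c₀
        = (K * c₀ * ind R (t₁ - t₂) * g₂ t₂) * (ind (2*R) (t₂ - t₃) * g₃ t₃) := by
      intro t₃; ring
    simp_rw [hrw]
    rw [lintegral_const_mul _ (show Measurable fun t₃ : ℝ => ind (2*R) (t₂ - t₃) * g₃ t₃ from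
      ((measurable_ind _).comp (measurable_const.sub measurable_id)).mul hg₃)]
    show _ = K * c₀ * (ind R (t₁ - t₂) * (g₂ t₂ * (∫⁻ t₃ : ℝ, ind (2*R) (t₂ - t₃) * g₃ t₃)))
    ring
  -- assemble
  have main : (∫⁻ t₁ : ℝ, ∫⁻ t₂ : ℝ, ∫⁻ t₃ : ℝ, ∫⁻ t₄ : ℝ,
      ENNReal.ofReal (ψ ((t₁ - t₂) / 2 ^ l)) * ENNReal.ofReal (ψ ((t₁ - t₃) / 2 ^ l)) *
      ENNReal.ofReal (ψ ((t₂ - t₄) / 2 ^ l)) * ENNReal.ofReal (ψ ((t₃ - t₄) / 2 ^ l)) *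
      (g₁ t₁ * g₂ t₂ * g₃ t₃ * g₄ t₄))
      ≤ K * c₀ * (c₀ * (c₂ * N₂ * N₃)) := by
    refine step1.trans ?_
    have step2 : (∫⁻ t₁ : ℝ, ∫⁻ t₂ : ℝ, ∫⁻ t₃ : ℝ, ∫⁻ t₄ : ℝ,
        ((M:ℝ≥0∞) * ind R (t₁ - t₂)) * ((M:ℝ≥0∞) * ind R (t₁ - t₃)) *
        ((M:ℝ≥0∞) * ind R (t₂ - t₄)) * ((M:ℝ≥0∞) * ind R (t₃ - t₄)) *
        (A₁ * g₂ t₂ * g₃ t₃ * A₄))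
        ≤ ∫⁻ t₁ : ℝ, ∫⁻ t₂ : ℝ, K * c₀ * (ind R (t₁ - t₂) * h t₂) := by
      refine lintegral_mono fun t₁ => lintegral_mono fun t₂ => ?_
      rw [← ev3 t₁ t₂]
      refine (lintegral_mono fun t₃ => ?_).trans
        (lintegral_mono fun t₃ => tri t₁ t₂ t₃)
      exact ev4 t₁ t₂ t₃
    refine step2.trans ?_
    have pull : (∫⁻ t₁ : ℝ, ∫⁻ t₂ : ℝ, K * c₀ * (ind R (t₁ - t₂) * h t₂))
        = K * c₀ * (c₀ * ∫⁻ t₂, h t₂) := by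
      have : ∀ t₁ : ℝ, (∫⁻ t₂ : ℝ, K * c₀ * (ind R (t₁ - t₂) * h t₂))
          = K * c₀ * ∫⁻ t₂ : ℝ, ind R (t₁ - t₂) * h t₂ := by
        intro t₁
        exact lintegral_const_mul _ ((hmind t₁).mul hhm)
      simp_rw [this]
      rw [lintegral_const_mul _ (by
        apply Measurable.lintegral_prod_right'
          (f := fun p : ℝ × ℝ => ind R (p.1 - p.2) * h p.2)
        exact ((measurable_ind _).comp (measurable_fst.sub measurable_snd)).mul
          (hhm.comp measurable_snd))]
      rw [swap_ind R hhm]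
    rw [pull]
    have hint : (∫⁻ t₂, h t₂) ≤ c₂ * N₂ * N₃ := by
      have : ∀ t₂ : ℝ, h t₂ = ∫⁻ t₃ : ℝ, ind (2*R) (t₂ - t₃) * (g₂ t₂ * g₃ t₃) := by
        intro t₂
        show g₂ t₂ * (∫⁻ t₃ : ℝ, ind (2*R) (t₂ - t₃) * g₃ t₃) = _
        rw [← lintegral_const_mul _ (show Measurable fun t₃ : ℝ => ind (2*R) (t₂ - t₃) * g₃ t₃ from
          ((measurable_ind _).comp (measurable_const.sub measurable_id)).mul hg₃)]
        exact lintegral_congr fun t₃ => by ring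
      simp_rw [this]
      exact cauchy_schwarz (2*R) g₂ g₃ hg₂ hg₃
    gcongr
  -- finish with arithmetic
  rw [Lambda]
  calc ((2:ℝ≥0∞) ^ (2*l))⁻¹ * (∫⁻ t₁ : ℝ, ∫⁻ t₂ : ℝ, ∫⁻ t₃ : ℝ, ∫⁻ t₄ : ℝ,
      ENNReal.ofReal (ψ ((t₁ - t₂) / 2 ^ l)) * ENNReal.ofReal (ψ ((t₁ - t₃) / 2 ^ l)) *
      ENNReal.ofReal (ψ ((t₂ - t₄) / 2 ^ l)) * ENNReal.ofReal (ψ ((t₃ - t₄) / 2 ^ l)) *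
      (g₁ t₁ * g₂ t₂ * g₃ t₃ * g₄ t₄))
      ≤ ((2:ℝ≥0∞) ^ (2*l))⁻¹ * (K * c₀ * (c₀ * (c₂ * N₂ * N₃))) := by gcongr
  _ ≤ ((128 * M ^ 4 : ℝ≥0) : ℝ≥0∞) * (2:ℝ≥0∞) ^ l * A₁ * N₂ * N₃ * A₄ := by
      have hc₀' : c₀ = 4 * (2:ℝ≥0∞) ^ l := by
        rw [hc₀, hR, show (2 * (2 * (2:ℝ) ^ l)) = 4 * 2 ^ l by ring,
          ENNReal.ofReal_mul (by norm_num), ENNReal.ofReal_pow (by norm_num)]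
        norm_num
      have hc₂' : c₂ = 8 * (2:ℝ≥0∞) ^ l := by
        rw [hc₂, hR, show (2 * (2 * (2 * (2:ℝ) ^ l))) = 8 * 2 ^ l by ring,
          ENNReal.ofReal_mul (by norm_num), ENNReal.ofReal_pow (by norm_num)]
        norm_num
      have hcoe : ((128 * M ^ 4 : ℝ≥0) : ℝ≥0∞) = 128 * ((M:ℝ≥0∞)) ^ 4 := by
        rw [ENNReal.coe_mul, ENNReal.coe_pow]; norm_num
      rw [hc₀', hc₂', hK, hcoe]
      rw [show ((2:ℝ≥0∞) ^ (2*l))⁻¹ * ((M:ℝ≥0∞) ^ 4 * A₁ * A₄ * (4 * 2 ^ l) *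
          (4 * 2 ^ l * (8 * 2 ^ l * N₂ * N₃)))
        = (((2:ℝ≥0∞) ^ (2*l))⁻¹ * (2:ℝ≥0∞) ^ (2*l)) *
          (128 * ((M:ℝ≥0∞)) ^ 4 * 2 ^ l * A₁ * N₂ * N₃ * A₄) by ring]
      rw [ENNReal.inv_mul_cancel (by positivity) (ENNReal.pow_ne_top ENNReal.ofNat_ne_top),
        one_mul]
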